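/- Let n ∈ ℕ, let (m_t)_{t∈ℕ₀} be a positive n-periodic sequence with P := ∏_{s=0}^{n−1} m_s < 1, and let c ≥ 0. Define S(t) = c·Σ_{s=0}^{t−1} ∏_{r=s+1}^{t−1} m_r (with the empty product equal to 1). Then sup_{t∈ℕ₀} S(t) < ∞; in fact S(t) ≤ c·n·(max_t m_t ∨ 1)^n/(1−P) for all t ∈ ℕ₀. -/

import Mathlib

/-- boundedness of the input-accumulation sum
`S(t) = c · Σ_{s<t} Π_{r=s+1}^{t-1} m_r` under a periodic contractive product,
with an explicit bound in terms of `max` of the factors over one period. -/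
theorem input_accumulation_bounded
    (n : ℕ) (hn : 0 < n) (m : ℕ → ℝ) (hm : ∀ t, 0 < m t)
    (hper : ∀ t, m (t + n) = m t)
    (hP : ∏ s ∈ Finset.range n, m s < 1)
    (c : ℝ) (hc : 0 ≤ c) :
    (∃ B : ℝ, ∀ t : ℕ,
        c * ∑ s ∈ Finset.range t, ∏ r ∈ Finset.Ico (s + 1) t, m r ≤ B) ∧
      ∀ t : ℕ,
        c * ∑ s ∈ Finset.range t, ∏ r ∈ Finset.Ico (s + 1) t, m r ≤
          c * n *
              (max ((Finset.range n).sup' (Finset.nonempty_range_iff.mpr hn.ne') m) 1) ^ n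
            / (1 - ∏ s ∈ Finset.range n, m s) := by
  set P : ℝ := ∏ s ∈ Finset.range n, m s with hPdef
  set M : ℝ := max ((Finset.range n).sup' (Finset.nonempty_range_iff.mpr hn.ne') m) 1
    with hMdef
  have hPpos : 0 < P := Finset.prod_pos fun i _ => hm i
  have hden : 0 < 1 - P := by linarith
  have hM1 : (1 : ℝ) ≤ M := le_max_right _ _
  have hM0 : (0 : ℝ) ≤ M := by linarith
  -- periodicity extended
  have hper' : ∀ q t, m (t + q * n) = m t := by
    intro q
    induction q with
    | zero => simp
    | succ q ih =>
      intro t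
      have : t + (q + 1) * n = t + q * n + n := by ring
      rw [this, hper, ih]
  have hmle : ∀ r, m r ≤ M := by
    intro r
    have h1 : m r = m (r % n) := by
      conv_lhs => rw [← Nat.mod_add_div r n]
      rw [mul_comm, hper']
    rw [h1]
    exact le_trans
      (Finset.le_sup' m (Finset.mem_range.mpr (Nat.mod_lt r hn))) (le_max_left _ _)
  -- window product equals P
  have hwindow : ∀ a, ∏ r ∈ Finset.Ico a (a + n), m r = P := by
    intro a
    induction a with
    | zero => rw [zero_add, ← Finset.range_eq_Ico]
    | succ a ih =>
      have h1 : ∏ r ∈ Finset.Ico a (a + n), m r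
          = m a * ∏ r ∈ Finset.Ico (a + 1) (a + n), m r :=
        Finset.prod_eq_prod_Ico_succ_bot (by omega) m
      have h2 : ∏ r ∈ Finset.Ico (a + 1) (a + 1 + n), m r
          = (∏ r ∈ Finset.Ico (a + 1) (a + n), m r) * m (a + n) := by
        have : a + 1 + n = (a + n) + 1 := by omega
        rw [this, Finset.prod_Ico_succ_top (by omega)]
      rw [h2, hper a, mul_comm, ← h1, ih]
  -- product bound over any interval
  have key : ∀ L a, ∏ r ∈ Finset.Ico a (a + L), m r ≤ P ^ (L / n) * M ^ n := by
    intro L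
    induction L using Nat.strong_induction_on with
    | _ L ih =>
      intro a
      by_cases hL : L < n
      · have hLd : L / n = 0 := Nat.div_eq_of_lt hL
        rw [hLd, pow_zero, one_mul]
        calc ∏ r ∈ Finset.Ico a (a + L), m r
            ≤ ∏ r ∈ Finset.Ico a (a + L), M :=
              Finset.prod_le_prod (fun i _ => (hm i).le) (fun i _ => hmle i)
          _ = M ^ L := by rw [Finset.prod_const, Nat.card_Ico]; congr 1; omega
          _ ≤ M ^ n := pow_le_pow_right₀ hM1 hL.le
      · push_neg at hL
        have hsplit : ∏ r ∈ Finset.Ico a (a + L), m r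
            = (∏ r ∈ Finset.Ico a (a + n), m r)
              * ∏ r ∈ Finset.Ico (a + n) (a + L), m r :=
          (Finset.prod_Ico_consecutive m (by omega) (by omega)).symm
        have hrest : ∏ r ∈ Finset.Ico (a + n) (a + L), m r
            ≤ P ^ ((L - n) / n) * M ^ n := by
          have h := ih (L - n) (by omega) (a + n)
          have : a + n + (L - n) = a + L := by omega
          rwa [this] at h
        have hdiv : L / n = (L - n) / n + 1 := Nat.div_eq_sub_div hn hL
        rw [hsplit, hwindow, hdiv, pow_succ]
        calc P * ∏ r ∈ Finset.Ico (a + n) (a + L), m r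
            ≤ P * (P ^ ((L - n) / n) * M ^ n) := by
              exact mul_le_mul_of_nonneg_left hrest hPpos.le
          _ = P ^ ((L - n) / n) * P * M ^ n := by ring
  -- geometric sum bound
  have hgeo : ∀ t : ℕ, ∑ j ∈ Finset.range t, P ^ j ≤ 1 / (1 - P) := by
    intro t
    rw [geom_sum_eq (by linarith : P ≠ 1)]
    have heq : (P ^ t - 1) / (P - 1) = (1 - P ^ t) / (1 - P) := by
      rw [div_eq_div_iff (by linarith) (by linarith)]; ring
    rw [heq]
    have hpt : 0 ≤ P ^ t := pow_nonneg hPpos.le t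
    gcongr
    linarith
  -- sum of P^(k/n) bound
  have hsum2 : ∀ t : ℕ, ∑ k ∈ Finset.range (n * t), P ^ (k / n)
      = n * ∑ j ∈ Finset.range t, P ^ j := by
    intro t
    induction t with
    | zero => simp
    | succ t ih =>
      have h1 : n * (t + 1) = n * t + n := by ring
      have hsplit : ∑ k ∈ Finset.range (n * t + n), P ^ (k / n)
          = ∑ k ∈ Finset.range (n * t), P ^ (k / n)
            + ∑ k ∈ Finset.Ico (n * t) (n * t + n), P ^ (k / n) := by
        rw [Finset.range_eq_Ico,
          ← Finset.sum_Ico_consecutive (fun k => P ^ (k / n)) (Nat.zero_le (n * t))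
            (Nat.le_add_right (n * t) n), ← Finset.range_eq_Ico]
      have htail : ∑ k ∈ Finset.Ico (n * t) (n * t + n), P ^ (k / n) = n * P ^ t := by
        rw [Finset.sum_Ico_eq_sum_range]
        have h2 : ∀ i ∈ Finset.range (n * t + n - n * t), P ^ ((n * t + i) / n) = P ^ t := by
          intro i hi
          simp only [Finset.mem_range] at hi
          congr 1
          have hi' : i < n := by omega
          have he : n * t + i = i + n * t := by ring
          rw [he, Nat.add_mul_div_left i t hn, Nat.div_eq_of_lt hi']
          omega
        have h3 : n * t + n - n * t = n := by omega
        rw [Finset.sum_congr rfl h2, Finset.sum_const, h3, Finset.card_range, nsmul_eq_mul]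
      rw [h1, hsplit, htail, ih, Finset.sum_range_succ]
      ring
  have hsum3 : ∀ t : ℕ, ∑ k ∈ Finset.range t, P ^ (k / n) ≤ n / (1 - P) := by
    intro t
    have h1 : ∑ k ∈ Finset.range t, P ^ (k / n)
        ≤ ∑ k ∈ Finset.range (n * t), P ^ (k / n) := by
      apply Finset.sum_le_sum_of_subset_of_nonneg
      · exact Finset.range_subset_range.mpr (by nlinarith [Nat.le_mul_of_pos_left t hn])
      · intro i _ _; positivity
    calc ∑ k ∈ Finset.range t, P ^ (k / n)
        ≤ n * ∑ j ∈ Finset.range t, P ^ j := by rw [← hsum2]; exact h1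
      _ ≤ n * (1 / (1 - P)) := by
          apply mul_le_mul_of_nonneg_left (hgeo t) (by positivity)
      _ = n / (1 - P) := by ring
  -- main bound
  have main : ∀ t : ℕ,
      c * ∑ s ∈ Finset.range t, ∏ r ∈ Finset.Ico (s + 1) t, m r
        ≤ c * n * M ^ n / (1 - P) := by
    intro t
    have hterm : ∀ s ∈ Finset.range t,
        ∏ r ∈ Finset.Ico (s + 1) t, m r ≤ P ^ ((t - 1 - s) / n) * M ^ n := by
      intro s hs
      simp only [Finset.mem_range] at hs
      have h := key (t - (s + 1)) (s + 1)
      have he : s + 1 + (t - (s + 1)) = t := by omega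
      rw [he] at h
      have he2 : t - (s + 1) = t - 1 - s := by omega
      rwa [he2] at h
    have h1 : ∑ s ∈ Finset.range t, ∏ r ∈ Finset.Ico (s + 1) t, m r
        ≤ ∑ s ∈ Finset.range t, P ^ ((t - 1 - s) / n) * M ^ n :=
      Finset.sum_le_sum hterm
    have h2 : ∑ s ∈ Finset.range t, P ^ ((t - 1 - s) / n) * M ^ n
        = (∑ k ∈ Finset.range t, P ^ (k / n)) * M ^ n := by
      rw [← Finset.sum_mul]
      congr 1
      exact Finset.sum_range_reflect (fun k => P ^ (k / n)) t
    have h3 : (∑ k ∈ Finset.range t, P ^ (k / n)) * M ^ n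
        ≤ (n / (1 - P)) * M ^ n := by
      apply mul_le_mul_of_nonneg_right (hsum3 t) (by positivity)
    have h4 : ∑ s ∈ Finset.range t, ∏ r ∈ Finset.Ico (s + 1) t, m r
        ≤ (n / (1 - P)) * M ^ n := by
      calc _ ≤ _ := h1
        _ = _ := h2
        _ ≤ _ := h3
    calc c * ∑ s ∈ Finset.range t, ∏ r ∈ Finset.Ico (s + 1) t, m r
        ≤ c * ((n / (1 - P)) * M ^ n) := mul_le_mul_of_nonneg_left h4 hc
      _ = c * n * M ^ n / (1 - P) := by ring
  exact ⟨⟨c * n * M ^ n / (1 - P), main⟩, main⟩
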